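/- Fix a real m > 0 and let p : ℤ → ℝ be nonnegative and summable with Σ_{k∈ℤ} p_k = 1. Define p′_k = p_k(1 − p_k^m) + (1/2)p_{k+1}^{m+1} + (1/2)p_{k−1}^{m+1}, and set F_k = Σ_{j ≤ k} p_j and F′_k = Σ_{j ≤ k} p′_j. Then p′ is nonnegative and summable, and for every k ∈ ℤ, F′_k = F_k + (1/2)[(F_{k+1} − F_k)^{m+1} − (F_k − F_{k−1})^{m+1}]. -/

import Mathlib

/-!
Writing `q j = p j ^ (m + 1)`, the update reads `p' = p + ½ Δ²q`, a discrete second difference.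
Summing a second difference over `j ≤ k` telescopes to the first difference `q (k + 1) - q k`
(the tail vanishes because `q` is summable), and the increments of the CDF are `F (k + 1) - F k =
p (k + 1)`, which gives the recursion. Nonnegativity comes from `p ≤ 1`, which also makes `q ≤ p`
summable.
-/

open fwdDiff

noncomputable def cumSum (f : ℤ → ℝ) (k : ℤ) : ℝ :=
  ∑' j, if j ≤ k then f j else 0

section cumSum

variable {f g : ℤ → ℝ}

lemma Summable.comp_add_right_int (hf : Summable f) (a : ℤ) : Summable fun j => f (j + a) :=
  (Equiv.addRight a).summable_iff.mpr hf

lemma Summable.fwdDiff_int (hf : Summable f) : Summable (Δ_[1] f) :=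
  (hf.comp_add_right_int 1).sub hf

lemma Summable.ite_le (hf : Summable f) (k : ℤ) :
    Summable fun j => if j ≤ k then f j else 0 :=
  (hf.indicator (Set.Iic k)).congr fun j => by simp [Set.indicator_apply]

lemma cumSum_add (hf : Summable f) (hg : Summable g) (k : ℤ) :
    cumSum (f + g) k = cumSum f k + cumSum g k := by
  rw [cumSum, cumSum, cumSum, ← (hf.ite_le k).tsum_add (hg.ite_le k)]
  congr 1
  funext j
  split_ifs <;> simp

lemma cumSum_sub (hf : Summable f) (hg : Summable g) (k : ℤ) :
    cumSum (f - g) k = cumSum f k - cumSum g k := by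
  rw [cumSum, cumSum, cumSum, ← (hf.ite_le k).tsum_sub (hg.ite_le k)]
  congr 1
  funext j
  split_ifs <;> simp

lemma cumSum_const_mul (c : ℝ) (f : ℤ → ℝ) (k : ℤ) :
    cumSum (fun j => c * f j) k = c * cumSum f k := by
  rw [cumSum, cumSum, ← tsum_mul_left]
  congr 1
  funext j
  split_ifs <;> simp

lemma cumSum_comp_add_right (f : ℤ → ℝ) (a k : ℤ) :
    cumSum (fun j => f (j + a)) k = cumSum f (k + a) := by
  rw [cumSum, cumSum, ← (Equiv.addRight a).tsum_eq fun j => if j ≤ k + a then f j else 0]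
  simp

lemma cumSum_add_one (hf : Summable f) (k : ℤ) :
    cumSum f (k + 1) = cumSum f k + f (k + 1) := by
  have hsplit : (fun j => if j ≤ k + 1 then f j else 0) =
      fun j => (if j ≤ k then f j else 0) + if j = k + 1 then f (k + 1) else 0 := by
    funext j
    by_cases hjk : j ≤ k
    · simp [hjk, show j ≤ k + 1 by omega, show j ≠ k + 1 by omega]
    · by_cases hj : j = k + 1
      · simp [hj]
      · simp [hjk, hj]
        omega
  rw [cumSum, hsplit, (hf.ite_le k).tsum_add (hasSum_ite_eq _ _).summable, tsum_ite_eq,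
    cumSum]

lemma cumSum_fwdDiff (hf : Summable f) (k : ℤ) : cumSum (Δ_[1] f) k = f (k + 1) := by
  change cumSum ((fun j => f (j + 1)) - f) k = _
  rw [cumSum_sub (hf.comp_add_right_int 1) hf, cumSum_comp_add_right, cumSum_add_one hf]
  ring

end cumSum

lemma mul_one_sub_rpow_nonneg {x m : ℝ} (hx₀ : 0 ≤ x) (hx₁ : x ≤ 1) (hm : 0 ≤ m) :
    0 ≤ x * (1 - x ^ m) :=
  mul_nonneg hx₀ (sub_nonneg.mpr (Real.rpow_le_one hx₀ hx₁ hm))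

lemma mul_one_sub_rpow {x m : ℝ} (hx : 0 ≤ x) (hm : m + 1 ≠ 0) :
    x * (1 - x ^ m) = x - x ^ (m + 1) := by
  rw [Real.rpow_add_one' hx hm]
  ring

theorem statement7 (m : ℝ) (hm : 0 < m)
    (p : ℤ → ℝ) (hnn : ∀ k : ℤ, 0 ≤ p k) (hsum : HasSum p 1)
    (p' : ℤ → ℝ)
    (hp' : ∀ k : ℤ, p' k =
      p k * (1 - p k ^ m) + (1 / 2) * p (k + 1) ^ (m + 1) + (1 / 2) * p (k - 1) ^ (m + 1))
    (F F' : ℤ → ℝ)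
    (hF : ∀ k : ℤ, F k = ∑' j : ℤ, if j ≤ k then p j else 0)
    (hF' : ∀ k : ℤ, F' k = ∑' j : ℤ, if j ≤ k then p' j else 0) :
    (∀ k : ℤ, 0 ≤ p' k) ∧ Summable p' ∧
      ∀ k : ℤ, F' k = F k + (1 / 2) * ((F (k + 1) - F k) ^ (m + 1) - (F k - F (k - 1)) ^ (m + 1)) := by
  have hp1 : ∀ k, p k ≤ 1 := fun k => le_hasSum hsum k fun j _ => hnn j
  set q : ℤ → ℝ := fun j => p j ^ (m + 1)
  have hq_nonneg : ∀ j, 0 ≤ q j := fun j => Real.rpow_nonneg (hnn j) _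
  have hq : Summable q := Summable.of_nonneg_of_le hq_nonneg
    (fun j => Real.rpow_le_self_of_le_one (hnn j) (hp1 j) (by linarith)) hsum.summable
  set g : ℤ → ℝ := fun j => q j - q (j - 1)
  have hg : Summable g := hq.sub (by simpa [sub_eq_add_neg] using hq.comp_add_right_int (-1))
  have hp'_eq : p' = p + fun j => 1 / 2 * Δ_[1] g j := by
    funext j
    simp only [hp', Pi.add_apply, fwdDiff, g, q, add_sub_cancel_right,
      mul_one_sub_rpow (hnn j) (by linarith : m + 1 ≠ 0)]
    ring
  have hFp : ∀ k, F k = cumSum p k := hF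
  have hinc : ∀ k, F (k + 1) - F k = p (k + 1) := fun k => by
    rw [hFp, hFp, cumSum_add_one hsum.summable, add_sub_cancel_left]
  have hdec : ∀ k, F k - F (k - 1) = p k := fun k => by simpa using hinc (k - 1)
  have hΔg : Summable fun j => 1 / 2 * Δ_[1] g j := hg.fwdDiff_int.mul_left _
  refine ⟨fun k => ?_, hp'_eq ▸ hsum.summable.add hΔg, fun k => ?_⟩
  · rw [hp' k]
    linarith [mul_one_sub_rpow_nonneg (hnn k) (hp1 k) hm.le, hq_nonneg (k + 1), hq_nonneg (k - 1)]
  · have hF'k : F' k = cumSum p' k := hF' k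
    rw [hF'k, hp'_eq, cumSum_add hsum.summable hΔg, cumSum_const_mul, cumSum_fwdDiff hg,
      hinc, hdec, hFp]
    simp only [g, q, add_sub_cancel_right]
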